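/- arXiv:2407.21651 — 2 statements merged into one kernel-verified Lean document; each statement's English description precedes it below -/
import Mathlib

section
/- Let (X_n)_{n≥0} be a stochastic process adapted to a filtration (F_n) taking values in the finite state space {1,…,N}, and let P be an N×N stochastic matrix. Then X is a Markov chain with transition matrix P with respect to (F_n) (i.e., P(X_{n+1} = i | F_n) = P_{X_n, i} for all n, i) if and only if for every vector z ∈ ℝ^N the process M_n = z_{X_n} − z_{X_0} − Σ_{m=1}^n ((P − I)z)_{X_{m−1}} is an (F_n)-martingale. -/
/-!
The increment of `z(X_n) - z(X_0) - ∑_{k<n} ((Pz)(X_k) - z(X_k))` from `n` to `n + 1` is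
`z(X_{n+1}) - (Pz)(X_n)`, whose second term is `F_n`-measurable. Hence the process is a
martingale iff `E[z(X_{n+1}) | F_n] = (Pz)(X_n)` for all `n`. Both sides are linear in `z`, so
this holds for every `z` iff it holds for the indicators `z = 1_{i}`, which is the Markov
property.
-/

open MeasureTheory Filter Matrix

section MarkovChain

variable {Ω S : Type*}

def compensatedProcess (X : ℕ → Ω → S) (f g : S → ℝ) (n : ℕ) (ω : Ω) : ℝ :=
  f (X n ω) - f (X 0 ω) - ∑ k ∈ Finset.range n, (g (X k ω) - f (X k ω))

lemma compensatedProcess_succ_sub (X : ℕ → Ω → S) (f g : S → ℝ) (n : ℕ) :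
    compensatedProcess X f g (n + 1) - compensatedProcess X f g n =
      fun ω => f (X (n + 1) ω) - g (X n ω) := by
  funext ω
  simp only [compensatedProcess, Pi.sub_apply, Finset.sum_range_succ]
  ring

variable [MeasurableSpace S] [DiscreteMeasurableSpace S]

lemma integrable_comp_of_finite [Finite S] {m : MeasurableSpace Ω} {μ : Measure Ω}
    [IsFiniteMeasure μ] {Y : Ω → S} (hY : Measurable Y) (f : S → ℝ) :
    Integrable (fun ω => f (Y ω)) μ :=
  Integrable.of_finite.comp_measurable hY

section Compensator

variable {m : MeasurableSpace Ω} {μ : Measure Ω} {𝒢 : Filtration ℕ m} {X : ℕ → Ω → S}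
  (f g : S → ℝ)

lemma stronglyAdapted_compensatedProcess (hX : ∀ n, Measurable[𝒢 n] (X n)) :
    StronglyAdapted 𝒢 (compensatedProcess X f g) := by
  have hmeas : ∀ (h : S → ℝ) {k n : ℕ}, k ≤ n →
      StronglyMeasurable[𝒢 n] fun ω => h (X k ω) :=
    fun h k n hkn =>
      (Measurable.of_discrete.comp ((hX k).mono (𝒢.mono hkn) le_rfl)).stronglyMeasurable
  intro n
  refine ((hmeas f le_rfl).sub (hmeas f n.zero_le)).sub ?_
  exact Finset.stronglyMeasurable_fun_sum _ fun k hk =>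
    hmeas (fun s => g s - f s) (Finset.mem_range.mp hk).le

lemma integrable_compensatedProcess [Finite S] [IsFiniteMeasure μ] (hX : ∀ n, Measurable (X n))
    (n : ℕ) : Integrable (compensatedProcess X f g n) μ :=
  ((integrable_comp_of_finite (hX n) f).sub (integrable_comp_of_finite (hX 0) f)).sub
    (integrable_finsetSum _ fun k _ => integrable_comp_of_finite (hX k) fun s => g s - f s)

lemma condExp_compensatedProcess_succ_sub [Finite S] [IsFiniteMeasure μ]
    (hX : ∀ n, Measurable[𝒢 n] (X n)) (n : ℕ) :
    μ[compensatedProcess X f g (n + 1) - compensatedProcess X f g n|𝒢 n] =ᵐ[μ]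
      μ[fun ω => f (X (n + 1) ω)|𝒢 n] - fun ω => g (X n ω) := by
  have hXm : ∀ n, Measurable (X n) := fun n => (hX n).mono (𝒢.le n) le_rfl
  rw [compensatedProcess_succ_sub]
  refine (condExp_sub (integrable_comp_of_finite (hXm _) f) (integrable_comp_of_finite (hXm n) g)
    _).trans ?_
  rw [condExp_of_stronglyMeasurable (𝒢.le n) (f := fun ω => g (X n ω))
    (Measurable.of_discrete.comp (hX n)).stronglyMeasurable (integrable_comp_of_finite (hXm n) g)]

lemma martingale_compensatedProcess_iff [Finite S] [IsFiniteMeasure μ]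
    (hX : ∀ n, Measurable[𝒢 n] (X n)) :
    Martingale (compensatedProcess X f g) 𝒢 μ ↔
      ∀ n, μ[fun ω => f (X (n + 1) ω)|𝒢 n] =ᵐ[μ] fun ω => g (X n ω) := by
  have hXm : ∀ n, Measurable (X n) := fun n => (hX n).mono (𝒢.le n) le_rfl
  have hint := integrable_compensatedProcess (μ := μ) f g hXm
  have hincr : ∀ n,
      μ[compensatedProcess X f g (n + 1) - compensatedProcess X f g n|𝒢 n] =ᵐ[μ] 0 ↔
        μ[fun ω => f (X (n + 1) ω)|𝒢 n] =ᵐ[μ] fun ω => g (X n ω) := fun n => by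
    rw [(condExp_compensatedProcess_succ_sub f g hX n).congr_left, ← eventuallyEq_iff_sub]
  refine ⟨fun h n => (hincr n).mp ?_, fun h => martingale_of_condExp_sub_eq_zero_nat
    (stronglyAdapted_compensatedProcess f g hX) hint fun n => (hincr n).mpr (h n)⟩
  refine (condExp_sub (hint _) (hint n) _).trans ?_
  rw [condExp_of_stronglyMeasurable (𝒢.le n) (h.stronglyAdapted n) (hint n)]
  exact (h.condExp_ae_eq n.le_succ).sub_eq

end Compensator

section Transition

variable [Fintype S] [DecidableEq S] {m m₀ : MeasurableSpace Ω} {μ : Measure Ω}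
  [IsFiniteMeasure μ] {Y : Ω → S}

lemma condExp_comp_ae_eq_sum (hY : Measurable Y) (z : S → ℝ) :
    μ[fun ω => z (Y ω)|m] =ᵐ[μ]
      ∑ i, z i • μ[fun ω => if Y ω = i then (1 : ℝ) else 0|m] := by
  have hdecomp :
      (fun ω => z (Y ω)) = ∑ i, z i • fun ω => if Y ω = i then (1 : ℝ) else 0 := by
    funext ω
    simp [Finset.sum_apply]
  rw [hdecomp]
  have hint : ∀ i, Integrable (fun ω => if Y ω = i then (1 : ℝ) else 0) μ :=
    fun i => integrable_comp_of_finite hY fun s => if s = i then 1 else 0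
  refine (condExp_finsetSum (fun i _ => (hint i).smul (z i)) m).trans ?_
  exact eventuallyEq_sum fun i _ => condExp_smul (z i) _ m

lemma forall_condExp_ite_ae_eq_iff_mulVec (hY : Measurable Y) (Q : Matrix S S ℝ) (W : Ω → S) :
    (∀ i, μ[fun ω => if Y ω = i then (1 : ℝ) else 0|m] =ᵐ[μ] fun ω => Q (W ω) i) ↔
      ∀ z : S → ℝ, μ[fun ω => z (Y ω)|m] =ᵐ[μ] fun ω => (Q *ᵥ z) (W ω) := by
  refine ⟨fun h z => ?_, fun h i => ?_⟩
  · filter_upwards [condExp_comp_ae_eq_sum (m := m) hY z, ae_all_iff.mpr h] with ω h1 h2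
    simp [h1, h2, mulVec, dotProduct, mul_comm]
  · simpa [mulVec, dotProduct] using h fun j => if j = i then 1 else 0

end Transition

end MarkovChain

theorem stmt_9_general {Ω : Type*} {m : MeasurableSpace Ω} (P : Measure Ω) [IsProbabilityMeasure P]
    (N : ℕ) (𝒢 : MeasureTheory.Filtration ℕ m)
    (X : ℕ → Ω → Fin N) (hadp : ∀ n, Measurable[𝒢 n] (X n))
    (M : Matrix (Fin N) (Fin N) ℝ) :
    (∀ n (i : Fin N),
        P[(fun ω => if X (n + 1) ω = i then (1 : ℝ) else 0)|𝒢 n] =ᵐ[P]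
          fun ω => M (X n ω) i) ↔
      (∀ z : Fin N → ℝ,
        Martingale
          (fun n ω => z (X n ω) - z (X 0 ω) -
            ∑ k ∈ Finset.range n, ((∑ j, M (X k ω) j * z j) - z (X k ω)))
          𝒢 P) := by
  have hXm : ∀ n, Measurable (X n) := fun n => (hadp n).mono (𝒢.le n) le_rfl
  refine (forall_congr' fun n =>
    forall_condExp_ite_ae_eq_iff_mulVec (μ := P) (hXm (n + 1)) M (X n)).trans ?_
  refine forall_comm.trans (forall_congr' fun z => ?_)
  exact (martingale_compensatedProcess_iff z (M *ᵥ z) hadp).symm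

/-- Martingale-problem characterization of a finite-state Markov chain: an adapted process
`X` on `{1,…,N}` is Markov with stochastic transition matrix `M` w.r.t. `(F_n)` iff for
every `z ∈ ℝ^N` the process
`M_n = z_{X_n} - z_{X_0} - Σ_{m=1}^n ((M - I) z)_{X_{m-1}}` is an `(F_n)`-martingale. -/
theorem stmt_9 {Ω : Type*} {m : MeasurableSpace Ω} (P : Measure Ω) [IsProbabilityMeasure P]
    (N : ℕ) (hN : 0 < N) (𝒢 : MeasureTheory.Filtration ℕ m)
    (X : ℕ → Ω → Fin N) (hadp : ∀ n, Measurable[𝒢 n] (X n))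
    (M : Matrix (Fin N) (Fin N) ℝ)
    (hnn : ∀ i j, 0 ≤ M i j) (hrow : ∀ i, ∑ j, M i j = 1) :
    (∀ n (i : Fin N),
        P[(fun ω => if X (n + 1) ω = i then (1 : ℝ) else 0)|𝒢 n] =ᵐ[P]
          fun ω => M (X n ω) i) ↔
      (∀ z : Fin N → ℝ,
        Martingale
          (fun n ω => z (X n ω) - z (X 0 ω) -
            ∑ k ∈ Finset.range n, ((∑ j, M (X k ω) j * z j) - z (X k ω)))
          𝒢 P) :=
  stmt_9_general P N 𝒢 X hadp M
end

section
/- Let N be a Poisson process with rate 1 and let T_1 < T_2 < … be its arrival times. For a fixed t > 0 and a measurable function λ : [0,t] → (0,∞) with ∫_0^t λ(s) ds < ∞, define Z = exp(∫_0^t (1 − λ(s)) ds + Σ_{n: T_n ≤ t} log λ(T_n)). Then E[Z] = 1. -/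
/-!
Independence of the increments together with the Poisson generating function
`E[v ^ (N_b - N_a)] = exp ((b - a) (v - 1))` gives `E[∏_{T_k ≤ t} f (T_k)] = exp (∫₀ᵗ (f - 1))`
for step functions `f ≥ 0`. The identity passes to continuous bounded `f` (sampled on finer and
finer grids), then to bounded measurable `f` (continuous approximations converging a.e. both for
Lebesgue measure and for the laws of the arrival times), the products being dominated by
`B ^ N_t`, whose expectation `exp (t (B - 1))` is finite; monotone convergence extends it to
integrable `f ≥ 0`. For `f = λ` this says `E[Z] = 1`, since
`Z = exp (∫₀ᵗ (1 - λ)) * ∏_{T_k ≤ t} λ (T_k)`.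
-/

open MeasureTheory Set ProbabilityTheory Filter Topology
open scoped ENNReal NNReal Nat BoundedContinuousFunction

namespace ProbabilityTheory

lemma lintegral_poissonMeasure (r : ℝ≥0) (f : ℕ → ℝ≥0∞) :
    ∫⁻ n, f n ∂poissonMeasure r = ∑' n, ENNReal.ofReal (Real.exp (-r) * r ^ n / n !) * f n := by
  simp [poissonMeasure, lintegral_sum_measure, lintegral_smul_measure]

lemma lintegral_ofReal_pow_poissonMeasure (r : ℝ≥0) {v : ℝ} (hv : 0 ≤ v) :
    ∫⁻ n, ENNReal.ofReal (v ^ n) ∂poissonMeasure r = ENNReal.ofReal (Real.exp (r * (v - 1))) := by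
  have hterm : ∀ n : ℕ, Real.exp (-r) * r ^ n / n ! * v ^ n
      = Real.exp (-r) * ((r * v) ^ n / n !) := fun n => by rw [mul_pow]; ring
  have hsum : HasSum (fun n : ℕ => Real.exp (-r) * r ^ n / n ! * v ^ n)
      (Real.exp (-r) * Real.exp (r * v)) := by
    simp_rw [hterm, Real.exp_eq_exp_ℝ]
    exact (NormedSpace.expSeries_div_hasSum_exp (r * v : ℝ)).mul_left _
  rw [lintegral_poissonMeasure]
  simp_rw [← ENNReal.ofReal_mul (by positivity : (0 : ℝ) ≤ Real.exp (-r) * r ^ _ / _ !)]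
  rw [← ENNReal.ofReal_tsum_of_nonneg (fun n => by positivity) hsum.summable, hsum.tsum_eq,
    ← Real.exp_add]
  congr 2
  ring

end ProbabilityTheory

theorem MeasureTheory.Integrable.exists_seq_continuous_tendsto_ae {α : Type*}
    [TopologicalSpace α] [NormalSpace α] [MeasurableSpace α] [BorelSpace α] {μ : Measure α}
    [μ.WeaklyRegular] {f : α → ℝ} (hf : Integrable f μ) :
    ∃ g : ℕ → α → ℝ, (∀ n, Continuous (g n)) ∧
      ∀ᵐ x ∂μ, Tendsto (fun n => g n x) atTop (𝓝 (f x)) := by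
  have (n : ℕ) : ∃ g : α →ᵇ ℝ, ∫⁻ x, ‖f x - g x‖ₑ ∂μ ≤ (n : ℝ≥0∞)⁻¹ ∧ Integrable g μ :=
    hf.exists_boundedContinuous_lintegral_sub_le (ENNReal.inv_ne_zero.2 (ENNReal.natCast_ne_top n))
  choose g hg _ using this
  have hconv : TendstoInMeasure μ (fun n => ⇑(g n)) atTop f := by
    refine tendstoInMeasure_of_tendsto_eLpNorm one_ne_zero
      (fun n => (g n).continuous.aestronglyMeasurable) hf.aestronglyMeasurable ?_
    refine tendsto_of_tendsto_of_tendsto_of_le_of_le tendsto_const_nhds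
      ENNReal.tendsto_inv_nat_nhds_zero (fun n => zero_le) fun n => ?_
    simpa only [eLpNorm_one_eq_lintegral_enorm, Pi.sub_apply, enorm_sub_rev] using hg n
  obtain ⟨ns, -, hns⟩ := hconv.exists_seq_tendsto_ae
  exact ⟨fun n => g (ns n), fun n => (g (ns n)).continuous, hns⟩

lemma tendsto_mul_ceil_div (s : ℝ) {h : ℕ → ℝ} (hpos : ∀ n, 0 < h n)
    (hlim : Tendsto h atTop (𝓝 0)) :
    Tendsto (fun n => h n * ⌈s / h n⌉) atTop (𝓝 s) := by
  refine tendsto_of_tendsto_of_tendsto_of_le_of_le tendsto_const_nhds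
    (by simpa using (tendsto_const_nhds (x := s)).add hlim) (fun n => ?_) fun n => ?_
  · rw [← div_le_iff₀' (hpos n)]
    exact Int.le_ceil _
  · have := mul_lt_mul_of_pos_left (Int.ceil_lt_add_one (s / h n)) (hpos n)
    rw [mul_add, mul_div_cancel₀ _ (hpos n).ne', mul_one] at this
    exact this.le

structure IsCountingPath (x : ℝ → ℕ) : Prop where
  map_zero : x 0 = 0
  mono : Monotone x
  right_const : ∀ t, ∃ ε > 0, ∀ s ∈ Ico t (t + ε), x s = x t

noncomputable def arrivalTime (x : ℝ → ℕ) (k : ℕ) : ℝ := sInf {u | 0 ≤ u ∧ k ≤ x u}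

lemma arrivalTime_nonneg (x : ℝ → ℕ) (k : ℕ) : 0 ≤ arrivalTime x k :=
  Real.sInf_nonneg fun _ hu => hu.1

namespace IsCountingPath

variable {x : ℝ → ℕ} {k : ℕ} {a b u : ℝ}

lemma arrivalTime_le_iff (hx : IsCountingPath x) (hb : 0 ≤ b) (hkb : k ≤ x b) (hu : 0 ≤ u) :
    arrivalTime x k ≤ u ↔ k ≤ x u := by
  set S := {u | 0 ≤ u ∧ k ≤ x u}
  have hS : S.Nonempty := ⟨b, hb, hkb⟩
  have hbdd : BddBelow S := ⟨0, fun _ hv => hv.1⟩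
  -- right-constancy at the infimum shows that the infimum is attained
  have hmem : sInf S ∈ S := by
    obtain ⟨ε, hε, hconst⟩ := hx.right_const (sInf S)
    obtain ⟨v, hvS, hvlt⟩ := exists_lt_of_csInf_lt hS (lt_add_of_pos_right _ hε)
    exact ⟨arrivalTime_nonneg x k, hconst v ⟨csInf_le hbdd hvS, hvlt⟩ ▸ hvS.2⟩
  exact ⟨fun h => hmem.2.trans (hx.mono h), fun h => csInf_le hbdd ⟨hu, h⟩⟩

lemma arrivalTime_mem_Ioc (hx : IsCountingPath x) (ha : 0 ≤ a) (hak : x a < k) (hkb : k ≤ x b) :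
    arrivalTime x k ∈ Ioc a b := by
  have hab : a ≤ b := le_of_lt (hx.mono.reflect_lt (hak.trans_le hkb))
  have hb : 0 ≤ b := ha.trans hab
  refine ⟨lt_of_not_ge fun h => ?_, (hx.arrivalTime_le_iff hb hkb hb).2 hkb⟩
  exact hak.not_ge ((hx.arrivalTime_le_iff hb hkb ha).1 h)

lemma prod_arrivalTime_eq_prod_pow (hx : IsCountingPath x) {τ : ℕ → ℝ} (hτ : Monotone τ)
    (hτ0 : τ 0 = 0) {f : ℝ → ℝ} {v : ℕ → ℝ} {m : ℕ}
    (hf : ∀ i < m, ∀ s ∈ Ioc (τ i) (τ (i + 1)), f s = v i) :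
    ∏ k ∈ Finset.Icc 1 (x (τ m)), f (arrivalTime x k)
      = ∏ i ∈ Finset.range m, v i ^ (x (τ (i + 1)) - x (τ i)) := by
  induction m with
  | zero => simp [hτ0, hx.map_zero]
  | succ m ih =>
    have hτm : 0 ≤ τ m := hτ0 ▸ hτ (Nat.zero_le m)
    have hblock : ∀ k ∈ Finset.Ioc (x (τ m)) (x (τ (m + 1))), f (arrivalTime x k) = v m :=
      fun k hk => by
        rw [Finset.mem_Ioc] at hk
        exact hf m m.lt_succ_self _ (hx.arrivalTime_mem_Ioc hτm hk.1 hk.2)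
    have hIoc : ∀ n, Finset.Icc 1 n = Finset.Ioc 0 n := Finset.Icc_add_one_left_eq_Ioc 0
    rw [Finset.prod_range_succ, ← ih fun i hi => hf i (hi.trans m.lt_succ_self), hIoc, hIoc,
      ← Finset.prod_Ioc_consecutive _ (Nat.zero_le _) (hx.mono (hτ m.le_succ)),
      Finset.prod_congr rfl hblock, Finset.prod_const, Nat.card_Ioc]

end IsCountingPath

lemma integral_Ioc_eq_sum_of_step {τ : ℕ → ℝ} (hτ : Monotone τ) {f : ℝ → ℝ} {v : ℕ → ℝ} {m : ℕ}
    (hf : ∀ i < m, ∀ s ∈ Ioc (τ i) (τ (i + 1)), f s = v i) :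
    ∫ s in Ioc (τ 0) (τ m), f s = ∑ i ∈ Finset.range m, v i * (τ (i + 1) - τ i) := by
  have hblock : ∀ i < m, IntegrableOn f (Ioc (τ i) (τ (i + 1))) := fun i hi =>
    (integrableOn_congr_fun (hf i hi) measurableSet_Ioc).2
      (integrableOn_const measure_Ioc_lt_top.ne)
  rw [← intervalIntegral.integral_of_le (hτ (Nat.zero_le m)),
    ← intervalIntegral.sum_integral_adjacent_intervals fun i hi =>
      (intervalIntegrable_iff_integrableOn_Ioc_of_le (hτ i.le_succ)).2 (hblock i hi)]
  refine Finset.sum_congr rfl fun i hi => ?_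
  rw [intervalIntegral.integral_of_le (hτ i.le_succ),
    setIntegral_congr_fun measurableSet_Ioc (hf i (Finset.mem_range.1 hi)), setIntegral_const,
    Real.volume_real_Ioc_of_le (hτ i.le_succ), smul_eq_mul, mul_comm]

section PoissonProcess

variable {Ω : Type*} {mΩ : MeasurableSpace Ω}

structure IsRateOnePoissonProcess (P : Measure Ω) (N : ℝ → Ω → ℕ) : Prop where
  measurable : ∀ t, Measurable (N t)
  isCountingPath : ∀ ω, IsCountingPath (N · ω)
  measure_increment_eq : ∀ s t : ℝ, 0 ≤ s → s < t → ∀ k : ℕ,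
    P {ω | N t ω - N s ω = k} = ENNReal.ofReal (Real.exp (-(t - s)) * (t - s) ^ k / k.factorial)
  iIndepFun_increments : ∀ (n : ℕ) (τ : ℕ → ℝ), Monotone τ →
    iIndepFun (fun (i : Fin n) ω => N (τ (i + 1)) ω - N (τ i) ω) P

noncomputable def arrivalProd (N : ℝ → Ω → ℕ) (t : ℝ) (f : ℝ → ℝ) (ω : Ω) : ℝ :=
  ∏ k ∈ Finset.Icc 1 (N t ω), f (arrivalTime (N · ω) k)

variable {P : Measure Ω} {N : ℝ → Ω → ℕ}

namespace IsRateOnePoissonProcess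

lemma measurable_arrivalTime (hN : IsRateOnePoissonProcess P N) (k : ℕ) :
    Measurable fun ω => arrivalTime (N · ω) k := by
  refine measurable_of_Iic fun u => ?_
  rcases lt_or_ge u 0 with hu | hu
  · convert MeasurableSet.empty
    ext ω
    simpa using hu.trans_le (arrivalTime_nonneg _ k)
  -- a path that never reaches `k` has arrival time `sInf ∅ = 0`
  have hpre : (fun ω => arrivalTime (N · ω) k) ⁻¹' Iic u
      = {ω | k ≤ N u ω} ∪ ⋂ n : ℕ, {ω | N n ω < k} := by
    ext ω
    by_cases hreach : ∃ v, 0 ≤ v ∧ k ≤ N v ω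
    · obtain ⟨v, hv, hkv⟩ := hreach
      have hnot : ¬ ∀ n : ℕ, N n ω < k := fun h =>
        (h ⌈v⌉₊).not_ge (hkv.trans ((hN.isCountingPath ω).mono (Nat.le_ceil v)))
      simp [(hN.isCountingPath ω).arrivalTime_le_iff hv hkv hu, hnot]
    · push Not at hreach
      have hS : {v | 0 ≤ v ∧ k ≤ N v ω} = ∅ :=
        eq_empty_of_forall_notMem fun v hv => (hreach v hv.1).not_ge hv.2
      simp [arrivalTime, hS, hu, fun n : ℕ => hreach n n.cast_nonneg]
  rw [hpre]
  exact (measurableSet_le measurable_const (hN.measurable u)).union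
    (MeasurableSet.iInter fun n => measurableSet_lt (hN.measurable n) measurable_const)

lemma measurable_arrivalProd (hN : IsRateOnePoissonProcess P N) (t : ℝ) {f : ℝ → ℝ}
    (hf : Measurable f) : Measurable (arrivalProd N t f) := by
  have hslice (n : ℕ) : Measurable fun ω => ∏ k ∈ Finset.Icc 1 n, f (arrivalTime (N · ω) k) :=
    Finset.measurable_prod _ fun k _ => hf.comp (hN.measurable_arrivalTime k)
  exact Measurable.comp (g := fun p : Ω × ℕ => ∏ k ∈ Finset.Icc 1 p.2, f (arrivalTime (N · p.1) k))
    (f := fun ω => (ω, N t ω)) (measurable_from_prod_countable_left hslice)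
    (measurable_id.prodMk (hN.measurable t))

lemma measurable_increment (hN : IsRateOnePoissonProcess P N) (a b : ℝ) :
    Measurable fun ω => N b ω - N a ω :=
  (hN.measurable b).sub (hN.measurable a)

lemma map_increment_eq_poissonMeasure [IsProbabilityMeasure P]
    (hN : IsRateOnePoissonProcess P N) {a b : ℝ} (ha : 0 ≤ a) (hab : a ≤ b) :
    P.map (fun ω => N b ω - N a ω) = poissonMeasure (b - a).toNNReal := by
  refine Measure.ext_iff_singleton.2 fun n => ?_
  rw [Measure.map_apply (hN.measurable_increment a b) (measurableSet_singleton n),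
    poissonMeasure_singleton, Real.coe_toNNReal _ (sub_nonneg.2 hab)]
  rcases hab.lt_or_eq with hlt | rfl
  · exact hN.measure_increment_eq a b ha hlt n
  · rcases eq_or_ne n 0 with rfl | hn
    · simp
    · have h0n : (0 : ℕ) ∉ ({n} : Set ℕ) := by simpa using hn.symm
      simp [hn, preimage_const_of_notMem h0n]

lemma lintegral_ofReal_pow_increment [IsProbabilityMeasure P] (hN : IsRateOnePoissonProcess P N)
    {a b v : ℝ} (ha : 0 ≤ a) (hab : a ≤ b) (hv : 0 ≤ v) :
    ∫⁻ ω, ENNReal.ofReal (v ^ (N b ω - N a ω)) ∂P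
      = ENNReal.ofReal (Real.exp ((b - a) * (v - 1))) := by
  rw [← lintegral_map (f := fun n => ENNReal.ofReal (v ^ n)) measurable_from_top
    (hN.measurable_increment a b), hN.map_increment_eq_poissonMeasure ha hab,
    lintegral_ofReal_pow_poissonMeasure _ hv, Real.coe_toNNReal _ (sub_nonneg.2 hab)]

lemma lintegral_arrivalProd_of_step [IsProbabilityMeasure P] (hN : IsRateOnePoissonProcess P N)
    {τ : ℕ → ℝ} (hτ : Monotone τ) (hτ0 : τ 0 = 0) {f : ℝ → ℝ} {v : ℕ → ℝ} (hv : ∀ i, 0 ≤ v i)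
    {m : ℕ} (hf : ∀ i < m, ∀ s ∈ Ioc (τ i) (τ (i + 1)), f s = v i) :
    ∫⁻ ω, ENNReal.ofReal (arrivalProd N (τ m) f ω) ∂P
      = ENNReal.ofReal (Real.exp ((∫ s in Ioc 0 (τ m), f s) - τ m)) := by
  have hprod (ω : Ω) : ENNReal.ofReal (arrivalProd N (τ m) f ω)
      = ∏ i : Fin m, ENNReal.ofReal (v i ^ (N (τ (i + 1)) ω - N (τ i) ω)) := by
    rw [arrivalProd, (hN.isCountingPath ω).prod_arrivalTime_eq_prod_pow hτ hτ0 hf,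
      ENNReal.ofReal_prod_of_nonneg fun i _ => pow_nonneg (hv i) _, ← Fin.prod_univ_eq_prod_range]
  have hexponent : (∫ s in Ioc 0 (τ m), f s) - τ m
      = ∑ i ∈ Finset.range m, (τ (i + 1) - τ i) * (v i - 1) := by
    have hint := integral_Ioc_eq_sum_of_step hτ hf
    rw [hτ0] at hint
    calc (∫ s in Ioc 0 (τ m), f s) - τ m
        = ∑ i ∈ Finset.range m, v i * (τ (i + 1) - τ i)
          - ∑ i ∈ Finset.range m, (τ (i + 1) - τ i) := by
          rw [hint, Finset.sum_range_sub, hτ0, sub_zero]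
      _ = ∑ i ∈ Finset.range m, (τ (i + 1) - τ i) * (v i - 1) := by
          rw [← Finset.sum_sub_distrib]
          exact Finset.sum_congr rfl fun i _ => by ring
  have hindep := (hN.iIndepFun_increments m τ hτ).comp (fun i n => ENNReal.ofReal (v i ^ n))
    fun i => measurable_from_top
  rw [lintegral_congr hprod, lintegral_prod_eq_prod_lintegral_of_indepFun Finset.univ
    (fun (i : Fin m) ω => ENNReal.ofReal (v i ^ (N (τ (i + 1)) ω - N (τ i) ω))) hindep
    fun i => Measurable.comp (g := fun n : ℕ => ENNReal.ofReal (v i ^ n)) measurable_from_top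
      (hN.measurable_increment _ _)]
  have hτnonneg (i : ℕ) : 0 ≤ τ i := hτ0 ▸ hτ (Nat.zero_le i)
  simp_rw [hN.lintegral_ofReal_pow_increment (hτnonneg _) (hτ (Nat.le_succ _)) (hv _)]
  rw [Fin.prod_univ_eq_prod_range
      (fun i => ENNReal.ofReal (Real.exp ((τ (i + 1) - τ i) * (v i - 1)))),
    ← ENNReal.ofReal_prod_of_nonneg fun i _ => (Real.exp_pos _).le, ← Real.exp_sum, hexponent]

lemma lintegral_ofReal_pow [IsProbabilityMeasure P] (hN : IsRateOnePoissonProcess P N)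
    {t B : ℝ} (ht : 0 ≤ t) (hB : 0 ≤ B) :
    ∫⁻ ω, ENNReal.ofReal (B ^ N t ω) ∂P = ENNReal.ofReal (Real.exp (t * (B - 1))) := by
  simpa [(hN.isCountingPath _).map_zero] using hN.lintegral_ofReal_pow_increment le_rfl ht hB

lemma lintegral_arrivalProd_of_tendsto [IsProbabilityMeasure P] (hN : IsRateOnePoissonProcess P N)
    {t : ℝ} (ht : 0 ≤ t) {f : ℝ → ℝ} {g : ℕ → ℝ → ℝ} {B : ℝ} (hg : ∀ n, Measurable (g n))
    (hg0 : ∀ n s, 0 ≤ g n s) (hgB : ∀ n s, g n s ≤ B)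
    (hformula : ∀ n, ∫⁻ ω, ENNReal.ofReal (arrivalProd N t (g n) ω) ∂P
      = ENNReal.ofReal (Real.exp ((∫ s in Ioc 0 t, g n s) - t)))
    (hlim : ∀ᵐ s ∂volume.restrict (Ioc 0 t), Tendsto (fun n => g n s) atTop (𝓝 (f s)))
    (hlim_arrival : ∀ᵐ ω ∂P, ∀ k ∈ Finset.Icc 1 (N t ω),
      Tendsto (fun n => g n (arrivalTime (N · ω) k)) atTop (𝓝 (f (arrivalTime (N · ω) k)))) :
    ∫⁻ ω, ENNReal.ofReal (arrivalProd N t f ω) ∂P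
      = ENNReal.ofReal (Real.exp ((∫ s in Ioc 0 t, f s) - t)) := by
  have hB : 0 ≤ B := (hg0 0 0).trans (hgB 0 0)
  have hdom (n : ℕ) (ω : Ω) : arrivalProd N t (g n) ω ≤ B ^ N t ω := by
    calc arrivalProd N t (g n) ω ≤ ∏ _k ∈ Finset.Icc 1 (N t ω), B :=
          Finset.prod_le_prod (fun k _ => hg0 n _) fun k _ => hgB n _
      _ = B ^ N t ω := by simp
  have hlhs : Tendsto (fun n => ∫⁻ ω, ENNReal.ofReal (arrivalProd N t (g n) ω) ∂P) atTop
      (𝓝 (∫⁻ ω, ENNReal.ofReal (arrivalProd N t f ω) ∂P)) :=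
    tendsto_lintegral_of_dominated_convergence (fun ω => ENNReal.ofReal (B ^ N t ω))
    (fun n => ENNReal.measurable_ofReal.comp (hN.measurable_arrivalProd t (hg n)))
    (fun n => ae_of_all _ fun ω => ENNReal.ofReal_le_ofReal (hdom n ω))
    (by rw [hN.lintegral_ofReal_pow ht hB]; exact ENNReal.ofReal_ne_top)
    (hlim_arrival.mono fun ω h =>
      (ENNReal.continuous_ofReal.tendsto _).comp (tendsto_finsetProd _ h))
  have hint : Tendsto (fun n => ∫ s in Ioc 0 t, g n s) atTop (𝓝 (∫ s in Ioc 0 t, f s)) :=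
    tendsto_integral_of_dominated_convergence (fun _ => B)
      (fun n => (hg n).aestronglyMeasurable) (integrable_const B)
      (fun n => ae_of_all _ fun s => by rw [Real.norm_of_nonneg (hg0 n s)]; exact hgB n s) hlim
  simp_rw [hformula] at hlhs
  exact tendsto_nhds_unique hlhs
    (((ENNReal.continuous_ofReal.comp Real.continuous_exp).tendsto _).comp (hint.sub_const t))

lemma lintegral_arrivalProd_of_continuous [IsProbabilityMeasure P]
    (hN : IsRateOnePoissonProcess P N) {t : ℝ} (ht : 0 < t) {g : ℝ → ℝ} (hg : Continuous g) {B : ℝ}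
    (hg0 : ∀ s, 0 ≤ g s) (hgB : ∀ s, g s ≤ B) :
    ∫⁻ ω, ENNReal.ofReal (arrivalProd N t g ω) ∂P
      = ENNReal.ofReal (Real.exp ((∫ s in Ioc 0 t, g s) - t)) := by
  -- `g` is the limit of its values at the right endpoints of the grid of mesh `t / (n + 1)`
  set h : ℕ → ℝ := fun n => t / (n + 1)
  have hpos (n : ℕ) : 0 < h n := by positivity
  have hmesh : Tendsto h atTop (𝓝 0) := by
    simpa [h, div_eq_mul_one_div t] using tendsto_one_div_add_atTop_nhds_zero_nat.const_mul t
  have hconv (s : ℝ) : Tendsto (fun n => g (h n * ⌈s / h n⌉)) atTop (𝓝 (g s)) :=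
    (hg.tendsto s).comp (tendsto_mul_ceil_div s hpos hmesh)
  refine hN.lintegral_arrivalProd_of_tendsto ht.le (g := fun n s => g (h n * ⌈s / h n⌉))
    (fun n => hg.measurable.comp (measurable_const.mul
      (measurable_from_top.comp (Int.measurable_ceil.comp (measurable_id.div_const _)))))
    (fun n s => hg0 _) (fun n s => hgB _) (fun n => ?_) (ae_of_all _ hconv)
    (ae_of_all _ fun ω k _ => hconv _)
  have hblock : ∀ i < n + 1, ∀ s ∈ Ioc (h n * i) (h n * ↑(i + 1)),
      g (h n * ⌈s / h n⌉) = g (h n * ↑(i + 1)) := by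
    intro i _ s hs
    have hceil : ⌈s / h n⌉ = i + 1 := by
      rw [Int.ceil_eq_iff]
      push_cast at hs ⊢
      constructor
      · rw [lt_div_iff₀' (hpos n)]
        linarith [hs.1]
      · rw [div_le_iff₀' (hpos n)]
        exact hs.2
    rw [hceil]
    push_cast
    rfl
  have htop : h n * ↑(n + 1) = t := by
    simp only [h]
    push_cast
    field_simp
  simpa only [htop] using hN.lintegral_arrivalProd_of_step
    (fun i j hij => mul_le_mul_of_nonneg_left (Nat.cast_le.2 hij) (hpos n).le) (by simp)
    (fun i => hg0 _) hblock

lemma lintegral_arrivalProd_of_bounded [IsProbabilityMeasure P]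
    (hN : IsRateOnePoissonProcess P N) {t : ℝ} (ht : 0 < t) {f : ℝ → ℝ} (hf : Measurable f) {B : ℝ}
    (hf0 : ∀ s, 0 ≤ f s) (hfB : ∀ s, f s ≤ B) :
    ∫⁻ ω, ENNReal.ofReal (arrivalProd N t f ω) ∂P
      = ENNReal.ofReal (Real.exp ((∫ s in Ioc 0 t, f s) - t)) := by
  -- approximate `f` almost everywhere for Lebesgue measure and for the laws of all arrival times
  -- at once; the weights `2⁻ᵏ` keep `ν` finite
  set ν : Measure ℝ := volume.restrict (Ioc 0 t) +
    Measure.sum fun k : ℕ => (2⁻¹ : ℝ≥0∞) ^ k • P.map fun ω => arrivalTime (N · ω) k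
  have : IsFiniteMeasure ν := by
    constructor
    simp [ν, Measure.sum_apply, Measure.map_apply (hN.measurable_arrivalTime _) MeasurableSet.univ,
      ENNReal.tsum_geometric]
  have hfint : Integrable f ν := (integrable_const B).mono' hf.aestronglyMeasurable
    (ae_of_all _ fun s => by rw [Real.norm_of_nonneg (hf0 s)]; exact hfB s)
  obtain ⟨g, hg, hlim⟩ := hfint.exists_seq_continuous_tendsto_ae
  set clamp : ℝ → ℝ := fun y => min (max y 0) B
  have hclamp : Continuous clamp := by fun_prop
  have hclamp_f (s : ℝ) : clamp (f s) = f s := by simp [clamp, hf0 s, hfB s]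
  have hlim' : ∀ᵐ s ∂ν, Tendsto (fun n => clamp (g n s)) atTop (𝓝 (f s)) :=
    hlim.mono fun s hs => hclamp_f s ▸ (hclamp.tendsto _).comp hs
  rw [ae_add_measure_iff, Measure.ae_sum_iff] at hlim'
  have hB : 0 ≤ B := (hf0 0).trans (hfB 0)
  refine hN.lintegral_arrivalProd_of_tendsto ht.le (g := fun n s => clamp (g n s))
    (fun n => (hclamp.comp (hg n)).measurable) (fun n s => le_min (le_max_right _ _) hB)
    (fun n s => min_le_right _ _)
    (fun n => hN.lintegral_arrivalProd_of_continuous ht (hclamp.comp (hg n))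
      (fun s => le_min (le_max_right _ _) hB) (fun s => min_le_right _ _)) hlim'.1 ?_
  have hk (k : ℕ) : ∀ᵐ ω ∂P, Tendsto (fun n => clamp (g n (arrivalTime (N · ω) k))) atTop
      (𝓝 (f (arrivalTime (N · ω) k))) := ae_of_ae_map (hN.measurable_arrivalTime k).aemeasurable
    (by simpa [ae_iff] using hlim'.2 k)
  filter_upwards [ae_all_iff.2 hk] with ω hω k _ using hω k

theorem lintegral_arrivalProd [IsProbabilityMeasure P] (hN : IsRateOnePoissonProcess P N)
    {t : ℝ} (ht : 0 < t) {f : ℝ → ℝ} (hf : Measurable f) (hf0 : ∀ s, 0 ≤ f s)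
    (hfint : IntegrableOn f (Ioc 0 t)) :
    ∫⁻ ω, ENNReal.ofReal (arrivalProd N t f ω) ∂P
      = ENNReal.ofReal (Real.exp ((∫ s in Ioc 0 t, f s) - t)) := by
  set F : ℕ → ℝ → ℝ := fun j s => min (f s) j
  have hF (j : ℕ) : Measurable (F j) := hf.min measurable_const
  have hF0 (j : ℕ) (s : ℝ) : 0 ≤ F j s := le_min (hf0 s) j.cast_nonneg
  have hF_tendsto (s : ℝ) : Tendsto (fun j => F j s) atTop (𝓝 (f s)) :=
    tendsto_const_nhds.congr' <| (eventually_ge_atTop ⌈f s⌉₊).mono fun j hj =>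
      (min_eq_left ((Nat.le_ceil _).trans (Nat.cast_le.2 hj))).symm
  have hlhs : Tendsto (fun j => ∫⁻ ω, ENNReal.ofReal (arrivalProd N t (F j) ω) ∂P) atTop
      (𝓝 (∫⁻ ω, ENNReal.ofReal (arrivalProd N t f ω) ∂P)) :=
    lintegral_tendsto_of_tendsto_of_monotone
      (fun j => (ENNReal.measurable_ofReal.comp (hN.measurable_arrivalProd t (hF j))).aemeasurable)
      (ae_of_all _ fun ω i j hij => ENNReal.ofReal_le_ofReal <| Finset.prod_le_prod
        (fun k _ => hF0 i _) fun k _ => min_le_min le_rfl (Nat.cast_le.2 hij))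
      (ae_of_all _ fun ω => (ENNReal.continuous_ofReal.tendsto _).comp
        (tendsto_finsetProd _ fun k _ => hF_tendsto _))
  have hint : Tendsto (fun j => ∫ s in Ioc 0 t, F j s) atTop (𝓝 (∫ s in Ioc 0 t, f s)) :=
    tendsto_integral_of_dominated_convergence f (fun j => (hF j).aestronglyMeasurable) hfint
      (fun j => ae_of_all _ fun s => by rw [Real.norm_of_nonneg (hF0 j s)]; exact min_le_left _ _)
      (ae_of_all _ hF_tendsto)
  simp_rw [hN.lintegral_arrivalProd_of_bounded ht (hF _) (hF0 _) fun s => min_le_right _ _] at hlhs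
  exact tendsto_nhds_unique hlhs
    (((ENNReal.continuous_ofReal.comp Real.continuous_exp).tendsto _).comp (hint.sub_const t))

end IsRateOnePoissonProcess

end PoissonProcess

/-- Poisson likelihood ratio with deterministic intensity: for a rate-1 Poisson process `N`
with arrival times `T_n` and a positive integrable intensity `λ` on `[0,t]`,
`E[exp(∫_0^t (1 - λ(s)) ds + Σ_{n : T_n ≤ t} log λ(T_n))] = 1` (the sum over arrivals up
to `t` is `Σ_{n=1}^{N_t} log λ(T_n)`). -/
theorem stmt_11 {Ω : Type*} {m : MeasurableSpace Ω} (P : Measure Ω) [IsProbabilityMeasure P]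
    (N : ℝ → Ω → ℕ) (hmeas : ∀ t, Measurable (N t))
    (h0 : ∀ ω, N 0 ω = 0)
    (hmono : ∀ ω, Monotone fun t => N t ω)
    (hrc : ∀ ω t, ∃ ε > 0, ∀ s ∈ Ico t (t + ε), N s ω = N t ω)
    -- Poisson increments with rate 1
    (hpois : ∀ s t : ℝ, 0 ≤ s → s < t → ∀ k : ℕ,
      P {ω | N t ω - N s ω = k} =
        ENNReal.ofReal (Real.exp (-(t - s)) * (t - s) ^ k / k.factorial))
    -- independent increments
    (hindep : ∀ (n : ℕ) (τ : ℕ → ℝ), Monotone τ →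
      iIndepFun
        (fun (i : Fin n) ω => N (τ (i + 1)) ω - N (τ i) ω) P)
    (T : ℕ → Ω → ℝ) (hT : ∀ n ω, T n ω = sInf {u | 0 ≤ u ∧ n ≤ N u ω})
    (t : ℝ) (ht : 0 < t)
    (lam : ℝ → ℝ) (hlmeas : Measurable lam) (hlpos : ∀ s, 0 < lam s)
    (hlint : IntegrableOn lam (Ioc 0 t)) :
    ∫ ω, Real.exp ((∫ s in Ioc (0 : ℝ) t, (1 - lam s)) +
        ∑ k ∈ Finset.Icc 1 (N t ω), Real.log (lam (T k ω))) ∂P = 1 := by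
  obtain rfl : T = fun k ω => arrivalTime (N · ω) k := funext fun k => funext (hT k)
  have hN : IsRateOnePoissonProcess P N :=
    ⟨hmeas, fun ω => ⟨h0 ω, hmono ω, hrc ω⟩, hpois, hindep⟩
  have hZ (ω : Ω) : Real.exp ((∫ s in Ioc (0 : ℝ) t, (1 - lam s)) +
      ∑ k ∈ Finset.Icc 1 (N t ω), Real.log (lam (arrivalTime (N · ω) k)))
      = Real.exp (∫ s in Ioc (0 : ℝ) t, (1 - lam s)) * arrivalProd N t lam ω := by
    rw [Real.exp_add, Real.exp_sum, arrivalProd]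
    exact congrArg _ (Finset.prod_congr rfl fun k _ => Real.exp_log (hlpos _))
  have hcompensator : ∫ s in Ioc (0 : ℝ) t, (1 - lam s) = -((∫ s in Ioc 0 t, lam s) - t) := by
    rw [integral_sub (integrable_const 1) hlint, setIntegral_const,
      Real.volume_real_Ioc_of_le ht.le]
    simp
  simp_rw [hZ]
  rw [integral_const_mul, integral_eq_lintegral_of_nonneg_ae (f := arrivalProd N t lam)
    (ae_of_all _ fun ω => Finset.prod_nonneg fun k _ => (hlpos _).le)
    (hN.measurable_arrivalProd t hlmeas).aestronglyMeasurable,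
    hN.lintegral_arrivalProd ht hlmeas (fun s => (hlpos s).le) hlint,
    ENNReal.toReal_ofReal (Real.exp_pos _).le, hcompensator, Real.exp_neg,
    inv_mul_cancel₀ (Real.exp_pos _).ne']
end
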